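/- Let W be a group generated by a finite set X, and suppose there exists a surjective group homomorphism η : W → H onto a group H that admits an unbounded homogeneous quasimorphism. Then the bi-invariant word norm ‖·‖_{X*} is unbounded on W. -/

import Mathlib

/-- The set of conjugates of elements of `X`. -/
def conjugates {G : Type*} [Group G] (X : Set G) : Set G :=
  {a | ∃ x ∈ X, ∃ g : G, a = g * x * g⁻¹}

/-- The bi-invariant word norm of `g` with respect to the generating set `X`:
the least `n` such that `g` is a product of `n` conjugates of elements of `X`. -/
noncomputable def biInvariantWordNorm {G : Type*} [Group G] (X : Set G) (g : G) : ℕ :=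
  sInf {n | ∃ l : List G, l.length = n ∧ (∀ a ∈ l, a ∈ conjugates X) ∧ l.prod = g}

/-- A group is virtually abelian if it has an abelian subgroup of finite index. -/
def IsVirtuallyAbelian (G : Type*) [Group G] : Prop :=
  ∃ H : Subgroup G, H.FiniteIndex ∧ ∀ a b : H, a * b = b * a

/-- A quasimorphism: the defect `|φ(gh) - φ(g) - φ(h)|` is uniformly bounded. -/
def IsQuasimorphism {G : Type*} [Group G] (φ : G → ℝ) : Prop :=
  ∃ C : ℝ, ∀ g h : G, |φ (g * h) - φ g - φ h| ≤ C

/-- A homogeneous function: `φ(gⁿ) = n • φ(g)` for all integers `n`. -/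
def IsHomogeneous {G : Type*} [Group G] (φ : G → ℝ) : Prop :=
  ∀ (g : G) (n : ℤ), φ (g ^ n) = n * φ g

/-!
Pull the quasimorphism back along `η` to an unbounded homogeneous quasimorphism `ψ` of `W` with
defect `C`. Homogeneity makes `ψ` conjugation invariant, so `ψ` is bounded by some `M` on `X*`,
and then `|ψ w| ≤ ‖w‖_{X*} (M + C)` whenever `w` is a product of elements of `X*`. Other elements
have norm `sInf ∅ = 0`, so one also needs `ψ` unbounded on such products: this holds because every
element of `W` is `p q⁻¹` with `p, q` products of elements of `X*`.
-/

open Bornology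

lemma exists_lt_abs_of_not_isBounded_range {α : Type*} {f : α → ℝ}
    (hf : ¬ IsBounded (Set.range f)) (B : ℝ) : ∃ a, B < |f a| := by
  by_contra! hB
  exact hf (isBounded_iff_forall_norm_le.2 ⟨B, by rintro _ ⟨a, rfl⟩; exact hB a⟩)

lemma eq_of_forall_nat_mul_abs_sub_le {a b B : ℝ} (h : ∀ n : ℕ, n * |a - b| ≤ B) : a = b := by
  by_contra hne
  have hd : 0 < |a - b| := abs_pos.2 (sub_ne_zero.2 hne)
  obtain ⟨n, hn⟩ := exists_nat_gt (B / |a - b|)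
  rw [div_lt_iff₀ hd] at hn
  linarith [h n]

namespace IsHomogeneous

variable {G H : Type*} [Group G] [Group H] {φ : G → ℝ}

lemma comp (hφ : IsHomogeneous φ) (f : H →* G) : IsHomogeneous (φ ∘ f) := fun g n => by
  simp only [Function.comp_apply, map_zpow, hφ (f g) n]

lemma map_one (hφ : IsHomogeneous φ) : φ 1 = 0 := by
  simpa using hφ 1 0

lemma map_inv (hφ : IsHomogeneous φ) (g : G) : φ g⁻¹ = -φ g := by
  simpa using hφ g (-1)

end IsHomogeneous

section Defect

variable {G : Type*} [Group G] {φ : G → ℝ} {C : ℝ}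
  (hC : ∀ g h : G, |φ (g * h) - φ g - φ h| ≤ C)
include hC

lemma defect_nonneg : 0 ≤ C :=
  (abs_nonneg _).trans (hC 1 1)

lemma abs_apply_mul_le (g h : G) : |φ (g * h)| ≤ |φ g| + |φ h| + C :=
  calc |φ (g * h)| = |(φ (g * h) - φ g - φ h) + φ g + φ h| := by ring_nf
    _ ≤ |φ (g * h) - φ g - φ h| + |φ g| + |φ h| := abs_add_three _ _ _
    _ ≤ |φ g| + |φ h| + C := by linarith [hC g h]

lemma abs_apply_list_prod_le (h1 : φ 1 = 0) {M : ℝ} :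
    ∀ {l : List G}, (∀ a ∈ l, |φ a| ≤ M) → |φ l.prod| ≤ l.length * (M + C)
  | [], _ => by simp [h1]
  | a :: l, hl => by
    have ha := hl a List.mem_cons_self
    have ih := abs_apply_list_prod_le h1 fun b hb => hl b (List.mem_cons_of_mem a hb)
    rw [List.prod_cons, List.length_cons]
    push_cast
    linarith [abs_apply_mul_le hC a l.prod]

lemma IsHomogeneous.apply_conj (hφ : IsHomogeneous φ) (g x : G) : φ (g * x * g⁻¹) = φ x := by
  refine eq_of_forall_nat_mul_abs_sub_le (B := 2 * C) fun n => ?_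
  -- `φ (g y g⁻¹)` is within `2C` of `φ g + φ y + φ g⁻¹ = φ y`; apply this to `y = xⁿ`.
  have h1 := hC g (x ^ (n : ℤ) * g⁻¹)
  have h2 := hC (x ^ (n : ℤ)) g⁻¹
  have hpow : φ (g * (x ^ (n : ℤ) * g⁻¹)) = n * φ (g * x * g⁻¹) := by
    rw [← mul_assoc, ← conj_zpow, hφ]; rfl
  rw [hpow] at h1
  rw [hφ, hφ.map_inv] at h2
  rw [abs_le] at h1 h2
  rw [← abs_of_nonneg (Nat.cast_nonneg (α := ℝ) n), ← abs_mul, mul_sub, abs_le]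
  push_cast at h1 h2 ⊢
  constructor <;> linarith [h1.1, h1.2, h2.1, h2.2]

end Defect

section WordNorm

variable {G : Type*} [Group G] {X : Set G}

lemma conj_mem_closure_conjugates {s : G} (hs : s ∈ Submonoid.closure (conjugates X)) (g : G) :
    g * s * g⁻¹ ∈ Submonoid.closure (conjugates X) := by
  suffices Submonoid.closure (conjugates X) ≤
      (Submonoid.closure (conjugates X)).comap (MulAut.conj g).toMonoidHom from this hs
  refine Submonoid.closure_le.2 ?_
  rintro _ ⟨x, hx, c, rfl⟩
  exact Submonoid.subset_closure ⟨x, hx, g * c, by simp [mul_assoc]⟩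

lemma exists_eq_mul_inv_of_closure_eq_top (hX : Subgroup.closure X = ⊤) (w : G) :
    ∃ p ∈ Submonoid.closure (conjugates X), ∃ q ∈ Submonoid.closure (conjugates X),
      w = p * q⁻¹ := by
  induction (hX ▸ Subgroup.mem_top w : w ∈ Subgroup.closure X) using
    Subgroup.closure_induction with
  | mem x hx =>
    exact ⟨x, Submonoid.subset_closure ⟨x, hx, 1, by group⟩, 1, one_mem _, by group⟩
  | one => exact ⟨1, one_mem _, 1, one_mem _, by group⟩
  | mul _ _ _ _ hu hv =>
    obtain ⟨p, hp, q, hq, rfl⟩ := hu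
    obtain ⟨r, hr, s, hs, rfl⟩ := hv
    exact ⟨p * (q⁻¹ * r * q⁻¹⁻¹), mul_mem hp (conj_mem_closure_conjugates hr _),
      s * q, mul_mem hs hq, by group⟩
  | inv _ _ hu =>
    obtain ⟨p, hp, q, hq, rfl⟩ := hu
    exact ⟨q, hq, p, hp, by group⟩

lemma exists_list_length_eq_biInvariantWordNorm {w : G}
    (hw : w ∈ Submonoid.closure (conjugates X)) :
    ∃ l : List G, l.length = biInvariantWordNorm X w ∧ (∀ a ∈ l, a ∈ conjugates X) ∧
      l.prod = w := by
  obtain ⟨l, hl, hprod⟩ := Submonoid.exists_list_of_mem_closure hw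
  exact Nat.sInf_mem (s := {n | ∃ l : List G, l.length = n ∧ (∀ a ∈ l, a ∈ conjugates X) ∧
    l.prod = w}) ⟨l.length, l, rfl, hl, hprod⟩

variable {φ : G → ℝ} {C : ℝ} (hC : ∀ g h : G, |φ (g * h) - φ g - φ h| ≤ C)
include hC

lemma abs_apply_le_biInvariantWordNorm_mul (h1 : φ 1 = 0) {M : ℝ}
    (hM : ∀ a ∈ conjugates X, |φ a| ≤ M) {w : G} (hw : w ∈ Submonoid.closure (conjugates X)) :
    |φ w| ≤ biInvariantWordNorm X w * (M + C) := by
  obtain ⟨l, hlen, hl, rfl⟩ := exists_list_length_eq_biInvariantWordNorm hw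
  rw [← hlen]
  exact abs_apply_list_prod_le hC h1 fun a ha => hM a (hl a ha)

lemma exists_mem_closure_conjugates_lt_abs (hφ : IsHomogeneous φ) (hX : Subgroup.closure X = ⊤)
    (hunb : ∀ B, ∃ w, B < |φ w|) (B : ℝ) :
    ∃ s ∈ Submonoid.closure (conjugates X), B < |φ s| := by
  obtain ⟨w, hw⟩ := hunb (2 * B + C)
  obtain ⟨p, hp, q, hq, rfl⟩ := exists_eq_mul_inv_of_closure_eq_top hX w
  have hsplit := abs_apply_mul_le hC p q⁻¹
  rw [hφ.map_inv, abs_neg] at hsplit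
  by_cases hpB : B < |φ p|
  · exact ⟨p, hp, hpB⟩
  · exact ⟨q, hq, by linarith⟩

end WordNorm

/-- If a group `W` with finite generating set `X` surjects onto a group `H`
admitting an unbounded homogeneous quasimorphism, then the bi-invariant word norm
`‖·‖_{X*}` is unbounded on `W`. -/
theorem biInvariantWordNorm_unbounded_of_surjection_onto_quasimorphism_group
    {W H : Type*} [Group W] [Group H]
    (X : Set W) (hXfin : X.Finite) (hXgen : Subgroup.closure X = ⊤)
    (η : W →* H) (hη : Function.Surjective η)
    (hφ : ∃ φ : H → ℝ, IsQuasimorphism φ ∧ IsHomogeneous φ ∧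
      ¬ Bornology.IsBounded (Set.range φ)) :
    ∀ N : ℕ, ∃ w : W, N < biInvariantWordNorm X w := by
  obtain ⟨φ, ⟨C, hC⟩, hhom, hunb⟩ := hφ
  have hψC : ∀ g h : W, |(φ ∘ η) (g * h) - (φ ∘ η) g - (φ ∘ η) h| ≤ C := fun g h => by
    simpa only [Function.comp_apply, map_mul] using hC (η g) (η h)
  have hψhom := hhom.comp η
  have hψunb : ∀ B, ∃ w, B < |(φ ∘ η) w| := fun B => by
    obtain ⟨h, hh⟩ := exists_lt_abs_of_not_isBounded_range hunb B
    obtain ⟨w, rfl⟩ := hη h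
    exact ⟨w, hh⟩
  obtain ⟨M, hM⟩ := (hXfin.image fun x => |(φ ∘ η) x|).bddAbove
  have hMconj : ∀ a ∈ conjugates X, |(φ ∘ η) a| ≤ max M 0 := by
    rintro _ ⟨x, hx, g, rfl⟩
    rw [hψhom.apply_conj hψC]
    exact (hM (Set.mem_image_of_mem _ hx)).trans (le_max_left _ _)
  intro N
  obtain ⟨w, hw, hlt⟩ :=
    exists_mem_closure_conjugates_lt_abs hψC hψhom hXgen hψunb (N * (max M 0 + C))
  have hle := abs_apply_le_biInvariantWordNorm_mul hψC hψhom.map_one hMconj hw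
  have hK : 0 ≤ max M 0 + C := add_nonneg (le_max_right _ _) (defect_nonneg hψC)
  exact ⟨w, by exact_mod_cast lt_of_mul_lt_mul_right (hlt.trans_le hle) hK⟩
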